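/- Let F be a finite field of characteristic 5 with |F| = 5^k and G = C_3 × D_10. Then V = 1 + J(FG) is a group of order 5^{24k} and satisfies v⁵ = 1 for every v ∈ V (i.e., V has exponent 5). -/

import Mathlib

/-!
Let `t = (1, r)`, of order 5. It generates the kernel of the projection
`q : C₃ × D₁₀ → C₃ × C₂`, and its conjugates are powers of it, so `a = t - 1` satisfies
`a · FG = FG · a`. As `a⁵ = t⁵ - 1 = 0` in characteristic 5, every element of `FG · a` has fifth
power zero, hence `FG · a ⊆ J(FG)`. Conversely `F[C₃ × C₂]` is semisimple by Maschke (6 is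
invertible in `F`), so `J(FG) ⊆ ker q_* ⊆ FG · a`. Thus `J(FG) = ker q_*` has dimension
`30 - 6 = 24`, `u ↦ u - 1` is a bijection `V → J(FG)`, and `(1 + x)⁵ = 1 + x⁵ = 1`.
-/

namespace Ideal

variable {R : Type*} [Ring R]

theorem le_jacobson_bot_of_isNilpotent {I : Ideal R} (hI : ∀ x ∈ I, IsNilpotent x) :
    I ≤ jacobson ⊥ := by
  rw [jacobson_bot, Ring.jacobson_eq_sInf_isMaximal]
  refine le_sInf fun M hM => ?_
  by_contra hIM
  obtain ⟨m, hm, y, hy, hmy⟩ :=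
    Submodule.mem_sup.mp ((hM.1.2 _ (left_lt_sup.mpr hIM)).symm ▸ Submodule.mem_top (x := 1))
  have hm_unit : IsUnit m := by
    rw [eq_sub_of_add_eq hmy]
    exact (hI y hy).isUnit_one_sub
  exact hM.ne_top (M.eq_top_of_isUnit_mem hm hm_unit)

theorem jacobson_bot_le_ker {S : Type*} [Ring S] [IsSemisimpleRing S] (f : R →+* S)
    (hf : Function.Surjective f) : jacobson (⊥ : Ideal R) ≤ RingHom.ker f := by
  have : RingHomSurjective f := ⟨hf⟩
  rw [jacobson_bot, RingHom.ker_eq_comap_bot, ← IsSemisimpleRing.jacobson_eq_bot S]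
  exact Ring.le_comap_jacobson f

theorem pow_eq_zero_of_mem_span_singleton {a : R} (ha : ∀ y, ∃ z, a * y = z * a) {n : ℕ}
    (han : a ^ n = 0) {x : R} (hx : x ∈ span {a}) : x ^ n = 0 := by
  obtain ⟨c, rfl⟩ := Submodule.mem_span_singleton.mp hx
  suffices ∀ m, ∃ z, (c * a) ^ m = z * a ^ m by
    obtain ⟨z, hz⟩ := this n
    rw [smul_eq_mul, hz, han, mul_zero]
  intro m
  induction m with
  | zero => exact ⟨1, by simp⟩
  | succ m ih =>
    obtain ⟨z, hz⟩ := ih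
    obtain ⟨w, hw⟩ := ha z
    exact ⟨c * w, by rw [pow_succ', hz, mul_assoc, ← mul_assoc a, hw, pow_succ']; noncomm_ring⟩

def oneAddUnits (I : Ideal R) : Subgroup Rˣ where
  carrier := {u | (u : R) - 1 ∈ I}
  mul_mem' {u v} hu hv := by
    have : ((u * v : Rˣ) : R) - 1 = u * ((v : R) - 1) + ((u : R) - 1) := by
      rw [Units.val_mul, mul_sub, mul_one, sub_add_sub_cancel]
    simpa only [Set.mem_ofPred_eq, this] using add_mem (I.mul_mem_left _ hv) hu
  one_mem' := by simp
  inv_mem' {u} hu := by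
    have : ((u⁻¹ : Rˣ) : R) - 1 = -(((u⁻¹ : Rˣ) : R) * ((u : R) - 1)) := by
      rw [mul_sub, Units.inv_mul, mul_one, neg_sub]
    simpa only [Set.mem_ofPred_eq, this] using neg_mem (I.mul_mem_left _ hu)

@[simp]
theorem mem_oneAddUnits {I : Ideal R} {u : Rˣ} : u ∈ I.oneAddUnits ↔ (u : R) - 1 ∈ I :=
  Iff.rfl

theorem natCard_oneAddUnits {I : Ideal R} (hI : ∀ x ∈ I, IsNilpotent x) :
    Nat.card I.oneAddUnits = Nat.card I := by
  refine Nat.card_congr <|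
    Equiv.ofBijective (fun u : I.oneAddUnits => (⟨((u : Rˣ) : R) - 1, u.2⟩ : I)) ⟨?_, ?_⟩
  · intro u v huv
    exact Subtype.ext (Units.ext (sub_left_injective (congrArg Subtype.val huv)))
  · rintro ⟨x, hx⟩
    obtain ⟨u, hu⟩ := (hI x hx).isUnit_one_add
    exact ⟨⟨u, by simpa [hu] using hx⟩, Subtype.ext (by simp [hu])⟩

theorem pow_char_eq_one_of_mem_oneAddUnits (p : ℕ) [Fact p.Prime] [CharP R p] {I : Ideal R}
    (hI : ∀ x ∈ I, x ^ p = 0) {u : Rˣ} (hu : u ∈ I.oneAddUnits) : u ^ p = 1 := by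
  ext
  rw [Units.val_pow_eq_pow_val, Units.val_one, ← add_sub_cancel (1 : R) u,
    add_pow_char_of_commute p (Commute.one_left _), one_pow, hI _ hu, add_zero]

end Ideal

namespace MonoidAlgebra

variable {k G Q : Type*}

section CommRing

variable [CommRing k]

theorem of_mul_pow_sub_of_mem_span [Monoid G] (h g : G) (n : ℕ) :
    of k G (h * g ^ n) - of k G h ∈ Ideal.span {of k G g - 1} := by
  have : of k G (h * g ^ n) - of k G h
      = (of k G h * ∑ i ∈ Finset.range n, of k G g ^ i) * (of k G g - 1) := by
    rw [mul_assoc, geom_sum_mul, map_mul, map_pow, mul_sub, mul_one]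
  rw [this]
  exact Ideal.mul_mem_left _ _ (Submodule.mem_span_singleton_self _)

theorem exists_of_sub_one_mul_eq [Group G] {g : G} (hg : ∀ h : G, ∃ n : ℕ, h⁻¹ * g * h = g ^ n)
    (y : MonoidAlgebra k G) : ∃ z, (of k G g - 1) * y = z * (of k G g - 1) := by
  induction y using MonoidAlgebra.induction_on with
  | of h =>
    obtain ⟨n, hn⟩ := hg h
    have hconj : g * h = h * g ^ n := by rw [← hn]; group
    obtain ⟨z, hz⟩ := Submodule.mem_span_singleton.mp (of_mul_pow_sub_of_mem_span (k := k) h g n)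
    exact ⟨z, by rw [smul_eq_mul] at hz; rw [hz, sub_one_mul, ← map_mul, hconj]⟩
  | add y₁ y₂ h₁ h₂ =>
    obtain ⟨z₁, hz₁⟩ := h₁
    obtain ⟨z₂, hz₂⟩ := h₂
    exact ⟨z₁ + z₂, by rw [mul_add, hz₁, hz₂, add_mul]⟩
  | smul c y hy =>
    obtain ⟨z, hz⟩ := hy
    exact ⟨c • z, by rw [mul_smul_comm, hz, smul_mul_assoc]⟩

theorem ker_mapDomainRingHom_le [Monoid G] [Monoid Q] (q : G →* Q)
    {I : Ideal (MonoidAlgebra k G)}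
    (hI : ∀ g g', q g = q g' → of k G g - of k G g' ∈ I) :
    RingHom.ker (mapDomainRingHom k q) ≤ I := by
  let s := Function.invFun q
  let φ := mapDomainLinearMap k k s ∘ₗ mapDomainLinearMap k k q
  have key : ∀ x, x - φ x ∈ I := by
    intro x
    induction x using MonoidAlgebra.induction_on with
    | of g =>
      simpa [φ, of_apply] using hI g (s (q g)) (Function.invFun_eq ⟨g, rfl⟩).symm
    | add x y hx hy =>
      rw [map_add, add_sub_add_comm]
      exact add_mem hx hy
    | smul c x hx =>
      rw [map_smul, ← smul_sub]
      exact Submodule.smul_of_tower_mem I c hx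
  intro x hx
  have hφ : φ x = 0 := by
    change mapDomainLinearMap k k s (mapDomainRingHom k q x) = 0
    rw [RingHom.mem_ker.mp hx, map_zero]
  simpa [hφ] using key x

theorem mapDomainRingHom_surjective [Monoid G] [Monoid Q] {q : G →* Q}
    (hq : Function.Surjective q) : Function.Surjective (mapDomainRingHom k q) := by
  intro y
  induction y using MonoidAlgebra.induction_on with
  | of b =>
    obtain ⟨g, rfl⟩ := hq b
    exact ⟨of k G g, by simp [of_apply]⟩
  | add y₁ y₂ h₁ h₂ =>
    obtain ⟨x₁, rfl⟩ := h₁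
    obtain ⟨x₂, rfl⟩ := h₂
    exact ⟨x₁ + x₂, map_add _ _ _⟩
  | smul c y hy =>
    obtain ⟨x, rfl⟩ := hy
    exact ⟨c • x, by simp⟩

theorem ker_mapDomainRingHom_le_span_of_sub_one [Group G] [Monoid Q] {q : G →* Q} {g : G}
    (hker : ∀ x ∈ q.ker, ∃ n : ℕ, x = g ^ n) :
    RingHom.ker (mapDomainRingHom k q) ≤ Ideal.span {of k G g - 1} :=
  ker_mapDomainRingHom_le q fun g₁ g₂ h => by
    obtain ⟨n, hn⟩ := hker (g₂⁻¹ * g₁) <| by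
      rw [MonoidHom.mem_ker, map_mul, h, ← map_mul, inv_mul_cancel, map_one]
    rw [show g₁ = g₂ * g ^ n by rw [← hn]; group]
    exact of_mul_pow_sub_of_mem_span g₂ g n

end CommRing

section Field

variable [Field k]

theorem natCard_ker_mapDomainRingHom [Finite k] [Monoid G] [Finite G] [Monoid Q]
    [Finite Q] {q : G →* Q} (hq : Function.Surjective q) :
    Nat.card (RingHom.ker (mapDomainRingHom k q)) = Nat.card k ^ (Nat.card G - Nat.card Q) := by
  have : Module.Finite k (MonoidAlgebra k G) := .of_basis (basis G k)
  let f := mapDomainLinearMap k k q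
  have hker : Nat.card (RingHom.ker (mapDomainRingHom k q)) = Nat.card (LinearMap.ker f) :=
    Nat.card_congr (Equiv.subtypeEquivRight fun _ => Iff.rfl)
  have hrange : LinearMap.range f = ⊤ :=
    LinearMap.range_eq_top.mpr (mapDomainRingHom_surjective (k := k) hq :)
  have hrank := f.finrank_range_add_finrank_ker
  rw [hrange, finrank_top, Module.finrank_eq_nat_card_basis (basis Q k),
    Module.finrank_eq_nat_card_basis (basis G k)] at hrank
  rw [hker, Module.natCard_eq_pow_finrank (K := k)]
  congr 1
  omega

instance charP [Monoid G] (p : ℕ) [CharP k p] : CharP (MonoidAlgebra k G) p :=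
  charP_of_injective_algebraMap' k p

theorem of_sub_one_pow_char_eq_zero [Monoid G] (p : ℕ) [Fact p.Prime] [CharP k p]
    {g : G} (hg : g ^ p = 1) : (of k G g - 1) ^ p = 0 := by
  rw [sub_pow_char_of_commute _ (Commute.one_right _), ← map_pow, hg, map_one, one_pow, sub_self]

section Jacobson

variable [Group G] [Group Q] [Finite Q] [NeZero (Nat.card Q : k)] {q : G →* Q} {g : G}

theorem jacobson_bot_eq_span_of_sub_one (hq : Function.Surjective q)
    (hker : ∀ x ∈ q.ker, ∃ n : ℕ, x = g ^ n) (hconj : ∀ h : G, ∃ n : ℕ, h⁻¹ * g * h = g ^ n)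
    {n : ℕ} (hnil : (of k G g - 1) ^ n = 0) :
    Ideal.jacobson (⊥ : Ideal (MonoidAlgebra k G)) = Ideal.span {of k G g - 1} :=
  le_antisymm
    ((Ideal.jacobson_bot_le_ker _ (mapDomainRingHom_surjective hq)).trans
      (ker_mapDomainRingHom_le_span_of_sub_one hker))
    (Ideal.le_jacobson_bot_of_isNilpotent fun _ hx =>
      ⟨n, Ideal.pow_eq_zero_of_mem_span_singleton (exists_of_sub_one_mul_eq hconj) hnil hx⟩)

theorem jacobson_bot_eq_ker_mapDomainRingHom (hq : Function.Surjective q)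
    (hker : ∀ x ∈ q.ker, ∃ n : ℕ, x = g ^ n) (hconj : ∀ h : G, ∃ n : ℕ, h⁻¹ * g * h = g ^ n)
    {n : ℕ} (hnil : (of k G g - 1) ^ n = 0) :
    Ideal.jacobson (⊥ : Ideal (MonoidAlgebra k G)) = RingHom.ker (mapDomainRingHom k q) :=
  le_antisymm (Ideal.jacobson_bot_le_ker _ (mapDomainRingHom_surjective hq))
    ((ker_mapDomainRingHom_le_span_of_sub_one hker).trans
      (jacobson_bot_eq_span_of_sub_one hq hker hconj hnil).ge)

end Jacobson

end Field

end MonoidAlgebra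

namespace DihedralGroup

variable {n : ℕ}

variable (n) in
def sign : DihedralGroup n →* Multiplicative (ZMod 2) where
  toFun
    | r _ => 1
    | sr _ => .ofAdd 1
  map_one' := rfl
  map_mul' := by
    rintro (i | i) (j | j) <;> simp only [r_mul_r, r_mul_sr, sr_mul_r, sr_mul_sr] <;> rfl

theorem sign_surjective : Function.Surjective (sign n) := by
  intro e
  induction e using Multiplicative.rec with
  | ofAdd a =>
    fin_cases a
    exacts [⟨r 0, rfl⟩, ⟨sr 0, rfl⟩]

theorem r_eq_r_one_pow [NeZero n] (i : ZMod n) : r i = r 1 ^ i.val := by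
  rw [r_one_pow, ZMod.natCast_zmod_val]

theorem exists_eq_r_one_pow_of_sign_eq_one [NeZero n] {x : DihedralGroup n} (hx : sign n x = 1) :
    ∃ m : ℕ, x = r 1 ^ m := by
  cases x with
  | r i => exact ⟨i.val, r_eq_r_one_pow i⟩
  | sr i => exact absurd hx (show Multiplicative.ofAdd (1 : ZMod 2) ≠ 1 by decide)

theorem exists_conj_r_one_eq_pow [NeZero n] (h : DihedralGroup n) :
    ∃ m : ℕ, h⁻¹ * r 1 * h = r 1 ^ m := by
  cases h with
  | r i => exact ⟨1, by simp [inv_r, r_mul_r]⟩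
  | sr i => exact ⟨(-1 : ZMod n).val, by simp [inv_sr, sr_mul_r, sr_mul_sr]⟩

variable {A : Type*} [Group A]

theorem exists_eq_pow_of_mem_ker_prodMap_sign [NeZero n] (x : A × DihedralGroup n)
    (hx : x ∈ ((MonoidHom.id A).prodMap (sign n)).ker) : ∃ m : ℕ, x = (1, r 1) ^ m := by
  obtain ⟨hx₁, hx₂⟩ := Prod.mk_eq_one.mp hx
  obtain ⟨m, hm⟩ := exists_eq_r_one_pow_of_sign_eq_one hx₂
  exact ⟨m, Prod.ext (by simpa using hx₁) (by simpa using hm)⟩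

theorem exists_conj_eq_pow [NeZero n] (h : A × DihedralGroup n) :
    ∃ m : ℕ, h⁻¹ * (1, r 1) * h = (1, r 1) ^ m := by
  obtain ⟨m, hm⟩ := exists_conj_r_one_eq_pow h.2
  exact ⟨m, Prod.ext (by simp) (by simpa using hm)⟩

end DihedralGroup

theorem stmt_11_general (F : Type) [Field F] [Fintype F] (k : ℕ)
    (hchar : CharP F 5) (hcard : Fintype.card F = 5 ^ k) :
    let G := Multiplicative (ZMod 3) × DihedralGroup 5
    ∃ H : Subgroup (MonoidAlgebra F G)ˣ,
      (∀ u : (MonoidAlgebra F G)ˣ,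
        u ∈ H ↔ (u : MonoidAlgebra F G) - 1 ∈ Ideal.jacobson (⊥ : Ideal (MonoidAlgebra F G))) ∧
      Nat.card H = 5 ^ (24 * k) ∧
      ∀ v ∈ H, v ^ 5 = 1 := by
  intro G
  have : Fact (Nat.Prime 5) := ⟨by norm_num⟩
  let q := (MonoidHom.id (Multiplicative (ZMod 3))).prodMap (DihedralGroup.sign 5)
  have hq : Function.Surjective q :=
    Function.surjective_id.prodMap DihedralGroup.sign_surjective
  have hG : Nat.card G = 30 := by simp [G, DihedralGroup.card]
  have hQ : Nat.card (Multiplicative (ZMod 3) × Multiplicative (ZMod 2)) = 6 := by simp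
  have : NeZero (Nat.card (Multiplicative (ZMod 3) × Multiplicative (ZMod 2)) : F) :=
    ⟨by rw [hQ, CharP.cast_eq_mod F 5]; norm_num⟩
  have ht : ((1, DihedralGroup.r 1) : G) ^ 5 = 1 := Prod.ext (one_pow _) DihedralGroup.r_one_pow_n
  have hnil := MonoidAlgebra.of_sub_one_pow_char_eq_zero (k := F) 5 ht
  have hJnil : ∀ x ∈ Ideal.jacobson (⊥ : Ideal (MonoidAlgebra F G)), x ^ 5 = 0 := by
    rw [MonoidAlgebra.jacobson_bot_eq_span_of_sub_one hq
      DihedralGroup.exists_eq_pow_of_mem_ker_prodMap_sign DihedralGroup.exists_conj_eq_pow hnil]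
    exact fun x => Ideal.pow_eq_zero_of_mem_span_singleton
      (MonoidAlgebra.exists_of_sub_one_mul_eq DihedralGroup.exists_conj_eq_pow) hnil
  refine ⟨(Ideal.jacobson ⊥).oneAddUnits, fun _ => Iff.rfl, ?_,
    fun _ => Ideal.pow_char_eq_one_of_mem_oneAddUnits 5 hJnil⟩
  rw [Ideal.natCard_oneAddUnits fun x hx => ⟨5, hJnil x hx⟩,
    MonoidAlgebra.jacobson_bot_eq_ker_mapDomainRingHom hq
      DihedralGroup.exists_eq_pow_of_mem_ker_prodMap_sign DihedralGroup.exists_conj_eq_pow hnil,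
    MonoidAlgebra.natCard_ker_mapDomainRingHom hq, hG, hQ, Nat.card_eq_fintype_card, hcard,
    ← pow_mul, mul_comm]

/-- For `F` a finite field with `5^k` elements and `G = C₃ × D₁₀`, the group
`V = 1 + J(FG)` has order `5^(24k)` and exponent 5 (every element satisfies `v⁵ = 1`). -/
theorem stmt_11 (F : Type) [Field F] [Fintype F] (k : ℕ) (hk : 0 < k)
    (hchar : CharP F 5) (hcard : Fintype.card F = 5 ^ k) :
    let G := Multiplicative (ZMod 3) × DihedralGroup 5
    ∃ H : Subgroup (MonoidAlgebra F G)ˣ,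
      (∀ u : (MonoidAlgebra F G)ˣ,
        u ∈ H ↔ (u : MonoidAlgebra F G) - 1 ∈ Ideal.jacobson (⊥ : Ideal (MonoidAlgebra F G))) ∧
      Nat.card H = 5 ^ (24 * k) ∧
      ∀ v ∈ H, v ^ 5 = 1 :=
  stmt_11_general F k hchar hcard
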